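/- arXiv:1805.12166 — 3 statements merged into one kernel-verified Lean document; each statement's English description precedes it below -/
import Mathlib

section
/- Let H be a positive semidefinite operator on a finite-dimensional Hilbert space A with smallest eigenvalue 0 and second smallest eigenvalue Δ > 0. If |ψ⟩ is a unit vector on A ⊗ R satisfying ⟨ψ| (H ⊗ I_R) |ψ⟩ ≤ ε, then there exists a unit vector |θ⟩ on A ⊗ R with (H ⊗ I_R)|θ⟩ = 0 and ‖ |ψ⟩⟨ψ| − |θ⟩⟨θ| ‖₁ ≤ 4√(ε/Δ). -/
open Kronecker ComplexOrder Matrix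

/-!
Let `P` be the spectral projection of `H` onto its kernel. The gap gives `H ⪰ Δ (1 - P)`, and
hence `H ⊗ I ⪰ Δ (1 - P ⊗ I)`, so the weight `p = ⟨ψ|P ⊗ I|ψ⟩` of `ψ` on the kernel satisfies
`1 - p ≤ ε / Δ`. Normalising `(P ⊗ I) ψ` (or, if it vanishes, taking any unit kernel vector,
in which case `ε / Δ ≥ 1`) gives a unit kernel vector `θ` with `|⟨ψ|θ⟩|² ≥ p`. Finally, for unit
vectors `‖|ψ⟩⟨ψ| - |θ⟩⟨θ|‖₁ ≤ 2 √(1 - |⟨ψ|θ⟩|²)`: the difference is Hermitian of rank at most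
two, and the sum of squares of its eigenvalues is `tr (|ψ⟩⟨ψ| - |θ⟩⟨θ|)² = 2 - 2 |⟨ψ|θ⟩|²`.
-/

/-- Trace norm of a complex matrix: trace of the positive square root of `Mᴴ * M`. -/
noncomputable def traceNorm {n : Type*} [Fintype n] [DecidableEq n] (M : Matrix n n ℂ) : ℝ :=
  (((Matrix.posSemidef_conjTranspose_mul_self M).1.eigenvectorUnitary.1 *
      diagonal (((↑) : ℝ → ℂ) ∘ (√·) ∘ (Matrix.posSemidef_conjTranspose_mul_self M).1.eigenvalues) *
      (star (Matrix.posSemidef_conjTranspose_mul_self M).1.eigenvectorUnitary : Matrix n n ℂ)).trace).re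

/-- Rank-one projector `|ψ⟩⟨ψ|`. -/
noncomputable def outer {n : Type*} [Fintype n] (ψ : n → ℂ) : Matrix n n ℂ :=
  Matrix.vecMulVec ψ (star ψ)

open scoped MatrixOrder

section Vectors

variable {n : Type*} [Fintype n]

lemma dotProduct_star_self_eq_re (w : n → ℂ) : star w ⬝ᵥ w = ((star w ⬝ᵥ w).re : ℂ) :=
  Complex.eq_re_of_ofReal_le (dotProduct_star_self_nonneg w)

lemma exists_real_smul_unit {w : n → ℂ} (hw : w ≠ 0) :
    ∃ c : ℝ, star ((c : ℂ) • w) ⬝ᵥ ((c : ℂ) • w) = 1 ∧ c ^ 2 * (star w ⬝ᵥ w).re = 1 := by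
  have hpos : 0 < (star w ⬝ᵥ w).re :=
    (Complex.lt_def.mp (dotProduct_star_self_pos_iff.mpr hw)).1
  set c : ℝ := (√(star w ⬝ᵥ w).re)⁻¹
  have hc : c ^ 2 * (star w ⬝ᵥ w).re = 1 := by
    rw [inv_pow, Real.sq_sqrt hpos.le, inv_mul_cancel₀ hpos.ne']
  refine ⟨c, ?_, hc⟩
  rw [star_smul, smul_dotProduct, dotProduct_smul, dotProduct_star_self_eq_re w, Complex.star_def,
    Complex.conj_ofReal, smul_eq_mul, smul_eq_mul]
  exact_mod_cast (by linear_combination hc : c * (c * (star w ⬝ᵥ w).re) = 1)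

lemma IsStarProjection.dotProduct_mulVec_eq {Q : Matrix n n ℂ} (hQ : IsStarProjection Q)
    (ψ : n → ℂ) : star ψ ⬝ᵥ Q *ᵥ ψ = star (Q *ᵥ ψ) ⬝ᵥ Q *ᵥ ψ := by
  rw [star_mulVec, ← dotProduct_mulVec, mulVec_mulVec, ← star_eq_conjTranspose,
    hQ.isSelfAdjoint.star_eq, hQ.isIdempotentElem.eq]

lemma exists_unit_mulVec_eq_zero_normSq_ge {K Q : Matrix n n ℂ} (hQ : IsStarProjection Q)
    (hKQ : K * Q = 0) (hker : ∃ v, v ≠ 0 ∧ K *ᵥ v = 0) (ψ : n → ℂ) :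
    ∃ θ, star θ ⬝ᵥ θ = 1 ∧ K *ᵥ θ = 0 ∧
      (star ψ ⬝ᵥ Q *ᵥ ψ).re ≤ Complex.normSq (star ψ ⬝ᵥ θ) := by
  by_cases hw : Q *ᵥ ψ = 0
  · obtain ⟨v, hv0, hv⟩ := hker
    obtain ⟨c, hc, -⟩ := exists_real_smul_unit hv0
    refine ⟨(c : ℂ) • v, hc, by rw [mulVec_smul, hv, smul_zero], ?_⟩
    rw [hw, dotProduct_zero, Complex.zero_re]
    exact Complex.normSq_nonneg _
  · obtain ⟨c, hc, hcs⟩ := exists_real_smul_unit hw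
    refine ⟨(c : ℂ) • Q *ᵥ ψ, hc,
      by rw [mulVec_smul, mulVec_mulVec, hKQ, zero_mulVec, smul_zero], ?_⟩
    rw [dotProduct_smul, hQ.dotProduct_mulVec_eq, dotProduct_star_self_eq_re, smul_eq_mul,
      ← Complex.ofReal_mul, Complex.normSq_ofReal, Complex.ofReal_re]
    exact le_of_eq (by linear_combination (-(star (Q *ᵥ ψ) ⬝ᵥ Q *ᵥ ψ).re) * hcs)

lemma isHermitian_outer (u : n → ℂ) : (outer u).IsHermitian :=
  (posSemidef_vecMulVec_self_star u).isHermitian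

lemma rank_outer_sub_outer_le (u v : n → ℂ) : (outer u - outer v).rank ≤ 2 := by
  have : outer u - outer v = of (fun i (k : Fin 2) => ![u i, -v i] k) *
      of (fun (k : Fin 2) j => ![star u j, star v j] k) := by
    ext i j
    simp [outer, mul_apply, Fin.sum_univ_two, vecMulVec_apply, sub_eq_add_neg]
  rw [this]
  exact (rank_mul_le_left _ _).trans ((rank_le_card_width _).trans_eq (Fintype.card_fin 2))

lemma trace_outer_mul_outer (u v : n → ℂ) :
    (outer u * outer v).trace = (star u ⬝ᵥ v) * (star v ⬝ᵥ u) := by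
  rw [outer, outer, vecMulVec_mul_vecMulVec, trace_vecMulVec, dotProduct_smul, smul_eq_mul,
    dotProduct_comm u]

lemma trace_sq_outer_sub_outer {ψ θ : n → ℂ} (hψ : star ψ ⬝ᵥ ψ = 1) (hθ : star θ ⬝ᵥ θ = 1) :
    ((outer ψ - outer θ) * (outer ψ - outer θ)).trace =
      ((2 - 2 * Complex.normSq (star ψ ⬝ᵥ θ) : ℝ) : ℂ) := by
  simp only [sub_mul, mul_sub, trace_sub, trace_outer_mul_outer, hψ, hθ]
  rw [star_dotProduct θ, Complex.star_def]
  push_cast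
  rw [Complex.normSq_eq_conj_mul_self]
  ring

end Vectors

section TraceNorm

variable {n : Type*} [Fintype n] [DecidableEq n]

lemma Matrix.IsHermitian.trace_cfc {M : Matrix n n ℂ} (hM : M.IsHermitian) (f : ℝ → ℝ) :
    (cfc f M).trace = ∑ i, (f (hM.eigenvalues i) : ℂ) := by
  rw [hM.cfc_eq, IsHermitian.cfc, Unitary.conjStarAlgAut_apply, trace_mul_cycle,
    Unitary.coe_star_mul_self, Matrix.one_mul, trace_diagonal]
  rfl

lemma Matrix.IsHermitian.trace_mul_self {M : Matrix n n ℂ} (hM : M.IsHermitian) :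
    (M * M).trace = ∑ i, ((hM.eigenvalues i ^ 2 : ℝ) : ℂ) := by
  rw [← sq, ← cfc_pow_id (R := ℝ) M 2, hM.trace_cfc]

lemma Matrix.IsHermitian.sq_sum_abs_eigenvalues_le {M : Matrix n n ℂ} (hM : M.IsHermitian) :
    (∑ i, |hM.eigenvalues i|) ^ 2 ≤ M.rank * ∑ i, hM.eigenvalues i ^ 2 := by
  rw [hM.rank_eq_card_non_zero_eigs, Fintype.card_subtype]
  set s := Finset.univ.filter fun i => hM.eigenvalues i ≠ 0
  calc (∑ i, |hM.eigenvalues i|) ^ 2 = (∑ i ∈ s, |hM.eigenvalues i|) ^ 2 := by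
        rw [Finset.sum_filter_of_ne fun i _ h => abs_ne_zero.mp h]
    _ ≤ s.card * ∑ i ∈ s, |hM.eigenvalues i| ^ 2 := sq_sum_le_card_mul_sum_sq
    _ ≤ s.card * ∑ i, hM.eigenvalues i ^ 2 := by
        simp_rw [sq_abs]
        gcongr
        exact Finset.subset_univ s

lemma traceNorm_eq_sum_abs_eigenvalues {M : Matrix n n ℂ} (hM : M.IsHermitian) :
    traceNorm M = ∑ i, |hM.eigenvalues i| := by
  have hsqrt : cfc Real.sqrt (Mᴴ * M) = cfc (fun x : ℝ => |x|) M := by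
    have hMM : Mᴴ * M = cfc (fun x : ℝ => x * x) M := by
      rw [cfc_mul (fun x : ℝ => x) (fun x : ℝ => x) M, cfc_id' ℝ M, hM.eq]
    rw [hMM, ← cfc_comp' Real.sqrt (fun x : ℝ => x * x) M]
    congr 1 with x
    exact Real.sqrt_mul_self_eq_abs x
  calc traceNorm M = (cfc Real.sqrt (Mᴴ * M)).trace.re := by
        rw [(posSemidef_conjTranspose_mul_self M).1.cfc_eq, IsHermitian.cfc,
          Unitary.conjStarAlgAut_apply]
        rfl
    _ = ∑ i, |hM.eigenvalues i| := by
        rw [hsqrt, hM.trace_cfc, ← Complex.ofReal_sum, Complex.ofReal_re]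

theorem traceNorm_outer_sub_outer_le {ψ θ : n → ℂ} (hψ : star ψ ⬝ᵥ ψ = 1)
    (hθ : star θ ⬝ᵥ θ = 1) :
    traceNorm (outer ψ - outer θ) ≤ 2 * √(1 - Complex.normSq (star ψ ⬝ᵥ θ)) := by
  set x := Complex.normSq (star ψ ⬝ᵥ θ)
  have hM := (isHermitian_outer ψ).sub (isHermitian_outer θ)
  have hsq : ∑ i, hM.eigenvalues i ^ 2 = 2 - 2 * x := by
    exact_mod_cast hM.trace_mul_self.symm.trans (trace_sq_outer_sub_outer hψ hθ)
  have hx : 0 ≤ 1 - x := by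
    nlinarith [Finset.sum_nonneg fun i (_ : i ∈ Finset.univ) => sq_nonneg (hM.eigenvalues i)]
  rw [traceNorm_eq_sum_abs_eigenvalues hM]
  refine le_of_pow_le_pow_left₀ two_ne_zero (by positivity) ?_
  calc (∑ i, |hM.eigenvalues i|) ^ 2 ≤ (outer ψ - outer θ).rank * ∑ i, hM.eigenvalues i ^ 2 :=
        hM.sq_sum_abs_eigenvalues_le
    _ ≤ 2 * (2 - 2 * x) := by
        rw [hsq]
        gcongr
        · linarith
        · exact_mod_cast rank_outer_sub_outer_le ψ θ
    _ = (2 * √(1 - x)) ^ 2 := by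
        rw [mul_pow, Real.sq_sqrt hx]
        ring

end TraceNorm

section KernelProjection

variable {n : Type*} [Fintype n] [DecidableEq n]

lemma re_dotProduct_mulVec_ge_of_posSemidef_sub {K Q : Matrix n n ℂ} {Δ : ℝ}
    (hgap : (K - (Δ : ℂ) • (1 - Q)).PosSemidef) {ψ : n → ℂ} (hψ : star ψ ⬝ᵥ ψ = 1) :
    Δ * (1 - (star ψ ⬝ᵥ Q *ᵥ ψ).re) ≤ (star ψ ⬝ᵥ K *ᵥ ψ).re := by
  have h := (Complex.le_def.mp (hgap.dotProduct_mulVec_nonneg ψ)).1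
  simp only [sub_mulVec, smul_mulVec, one_mulVec, dotProduct_sub, dotProduct_smul, hψ] at h
  simpa [sub_nonneg] using h

theorem exists_unit_mulVec_eq_zero_traceNorm_sub_le {K Q : Matrix n n ℂ}
    (hQ : IsStarProjection Q) (hKQ : K * Q = 0) {Δ ε : ℝ} (hΔ : 0 < Δ)
    (hgap : (K - (Δ : ℂ) • (1 - Q)).PosSemidef) (hker : ∃ v, v ≠ 0 ∧ K *ᵥ v = 0)
    {ψ : n → ℂ} (hψ : star ψ ⬝ᵥ ψ = 1) (hlow : (star ψ ⬝ᵥ K *ᵥ ψ).re ≤ ε) :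
    ∃ θ, star θ ⬝ᵥ θ = 1 ∧ K *ᵥ θ = 0 ∧ traceNorm (outer ψ - outer θ) ≤ 2 * √(ε / Δ) := by
  obtain ⟨θ, hθ, hKθ, hfid⟩ := exists_unit_mulVec_eq_zero_normSq_ge hQ hKQ hker ψ
  refine ⟨θ, hθ, hKθ, (traceNorm_outer_sub_outer_le hψ hθ).trans ?_⟩
  have hweight := re_dotProduct_mulVec_ge_of_posSemidef_sub hgap hψ
  gcongr
  rw [le_div_iff₀ hΔ]
  nlinarith

lemma Matrix.IsHermitian.exists_isStarProjection_of_gap {H : Matrix n n ℂ} (hH : H.IsHermitian)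
    {Δ : ℝ} (hgap : ∀ i, hH.eigenvalues i = 0 ∨ Δ ≤ hH.eigenvalues i) :
    ∃ P : Matrix n n ℂ, IsStarProjection P ∧ H * P = 0 ∧ (H - (Δ : ℂ) • (1 - P)).PosSemidef := by
  have hfin : (spectrum ℝ H).Finite := by
    rw [hH.spectrum_real_eq_range_eigenvalues]
    exact Set.finite_range _
  set χ : ℝ → ℝ := fun x => if x = 0 then 1 else 0
  have hχ : ContinuousOn χ (spectrum ℝ H) := hfin.continuousOn _
  refine ⟨cfc χ H, ⟨?_, cfc_predicate χ H⟩, ?_, ?_⟩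
  · rw [IsIdempotentElem, ← cfc_mul χ χ H]
    congr 1 with x
    by_cases hx : x = 0 <;> simp [χ, hx]
  · calc H * cfc χ H = cfc (fun x => x * χ x) H := by rw [cfc_mul _ _ H, cfc_id' ℝ H]
      _ = 0 := by
        rw [← cfc_zero ℝ H]
        congr 1 with x
        by_cases hx : x = 0 <;> simp [χ, hx]
  · have hcfc : H - (Δ : ℂ) • (1 - cfc χ H) = cfc (fun x => x - Δ * (1 - χ x)) H := by
      rw [cfc_sub _ _ H, cfc_const_mul _ _ H, cfc_sub _ _ H, cfc_const_one ℝ H, cfc_id' ℝ H,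
        Complex.coe_smul]
    rw [hcfc, ← nonneg_iff_posSemidef]
    refine cfc_nonneg fun x hx => ?_
    rw [hH.spectrum_real_eq_range_eigenvalues] at hx
    obtain ⟨i, rfl⟩ := hx
    by_cases h0 : hH.eigenvalues i = 0
    · simp [χ, h0]
    · simpa [χ, h0] using (hgap i).resolve_left h0

end KernelProjection

section Kronecker

variable {l m R : Type*} [Fintype l] [Fintype m]

lemma kronecker_mulVec_tmul [CommSemiring R] (A : Matrix l l R) (B : Matrix m m R) (x : l → R)
    (y : m → R) :
    (A ⊗ₖ B) *ᵥ (fun p => x p.1 * y p.2) = fun p => (A *ᵥ x) p.1 * (B *ᵥ y) p.2 := by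
  ext ⟨i, j⟩
  simp only [mulVec, dotProduct, Fintype.sum_prod_type, kroneckerMap_apply, Finset.sum_mul_sum]
  exact Finset.sum_congr rfl fun _ _ => Finset.sum_congr rfl fun _ _ => by ring

lemma exists_ne_zero_kronecker_one_mulVec_eq_zero [CommSemiring R] [DecidableEq m] [Nonempty m]
    {A : Matrix l l R} (h : ∃ v, v ≠ 0 ∧ A *ᵥ v = 0) :
    ∃ w, w ≠ 0 ∧ (A ⊗ₖ (1 : Matrix m m R)) *ᵥ w = 0 := by
  obtain ⟨v, hv0, hv⟩ := h
  obtain ⟨i, hi⟩ := Function.ne_iff.mp hv0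
  refine ⟨fun p => v p.1 * (1 : m → R) p.2, fun hw => hi ?_, ?_⟩
  · simpa using congr_fun hw (i, Classical.arbitrary m)
  · rw [kronecker_mulVec_tmul, hv]
    ext p
    simp

lemma IsStarProjection.kronecker [CommRing R] [StarRing R] {P : Matrix l l R} {Q : Matrix m m R}
    (hP : IsStarProjection P) (hQ : IsStarProjection Q) : IsStarProjection (P ⊗ₖ Q) :=
  ⟨by rw [IsIdempotentElem, ← mul_kronecker_mul, hP.isIdempotentElem.eq, hQ.isIdempotentElem.eq],
   by rw [IsSelfAdjoint, star_eq_conjTranspose, conjTranspose_kronecker, ← star_eq_conjTranspose,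
     ← star_eq_conjTranspose, hP.isSelfAdjoint.star_eq, hQ.isSelfAdjoint.star_eq]⟩

lemma Matrix.PosSemidef.kronecker_one_sub_smul_one_sub [DecidableEq l] [DecidableEq m]
    {H P : Matrix l l ℂ} {c : ℂ} (h : (H - c • (1 - P)).PosSemidef) :
    (H ⊗ₖ (1 : Matrix m m ℂ) - c • (1 - P ⊗ₖ (1 : Matrix m m ℂ))).PosSemidef := by
  have hK : H ⊗ₖ (1 : Matrix m m ℂ) - c • (1 - P ⊗ₖ (1 : Matrix m m ℂ)) =
      (H - c • (1 - P)) ⊗ₖ (1 : Matrix m m ℂ) := by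
    ext ⟨i, j⟩ ⟨k, j'⟩
    by_cases hj : j = j' <;> simp [one_apply, hj]
  rw [hK]
  exact h.kronecker .one

end Kronecker

theorem stmt0_general {a r : ℕ} (H : Matrix (Fin a) (Fin a) ℂ) (hH : H.PosSemidef)
    (Δ ε : ℝ) (hΔ : 0 < Δ)
    (hker : ∃ v : Fin a → ℂ, v ≠ 0 ∧ H.mulVec v = 0)
    (hgap : ∀ i, hH.1.eigenvalues i = 0 ∨ Δ ≤ hH.1.eigenvalues i)
    (ψ : Fin a × Fin r → ℂ) (hψ : star ψ ⬝ᵥ ψ = 1)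
    (hlow : (star ψ ⬝ᵥ (H ⊗ₖ (1 : Matrix (Fin r) (Fin r) ℂ)).mulVec ψ).re ≤ ε) :
    ∃ θ : Fin a × Fin r → ℂ, star θ ⬝ᵥ θ = 1 ∧
      (H ⊗ₖ (1 : Matrix (Fin r) (Fin r) ℂ)).mulVec θ = 0 ∧
      traceNorm (outer ψ - outer θ) ≤ 4 * Real.sqrt (ε / Δ) := by
  have : Nonempty (Fin r) := by
    by_contra h
    rw [not_nonempty_iff] at h
    simp [dotProduct] at hψ
  obtain ⟨P, hP, hHP, hPgap⟩ := hH.1.exists_isStarProjection_of_gap hgap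
  obtain ⟨θ, hθ, hKθ, hdist⟩ := exists_unit_mulVec_eq_zero_traceNorm_sub_le
    (hP.kronecker (.one _)) (by rw [← mul_kronecker_mul, hHP, zero_kronecker]) hΔ
    hPgap.kronecker_one_sub_smul_one_sub (exists_ne_zero_kronecker_one_mulVec_eq_zero hker) hψ hlow
  exact ⟨θ, hθ, hKθ, hdist.trans (by gcongr; norm_num)⟩

/-- If `H` is PSD with smallest eigenvalue `0` and second smallest eigenvalue at least `Δ > 0`,
and `|ψ⟩` is a unit vector on `A ⊗ R` with `⟨ψ|(H ⊗ I)|ψ⟩ ≤ ε`, then there is a unit vector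
`|θ⟩` with `(H ⊗ I)|θ⟩ = 0` and `‖ |ψ⟩⟨ψ| − |θ⟩⟨θ| ‖₁ ≤ 4√(ε/Δ)`. -/
theorem stmt0 {a r : ℕ} (H : Matrix (Fin a) (Fin a) ℂ) (hH : H.PosSemidef)
    (Δ ε : ℝ) (hΔ : 0 < Δ) (hε : 0 ≤ ε)
    (hker : ∃ v : Fin a → ℂ, v ≠ 0 ∧ H.mulVec v = 0)
    (hgap : ∀ i, hH.1.eigenvalues i = 0 ∨ Δ ≤ hH.1.eigenvalues i)
    (ψ : Fin a × Fin r → ℂ) (hψ : star ψ ⬝ᵥ ψ = 1)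
    (hlow : (star ψ ⬝ᵥ (H ⊗ₖ (1 : Matrix (Fin r) (Fin r) ℂ)).mulVec ψ).re ≤ ε) :
    ∃ θ : Fin a × Fin r → ℂ, star θ ⬝ᵥ θ = 1 ∧
      (H ⊗ₖ (1 : Matrix (Fin r) (Fin r) ℂ)).mulVec θ = 0 ∧
      traceNorm (outer ψ - outer θ) ≤ 4 * Real.sqrt (ε / Δ) :=
  stmt0_general H hH Δ ε hΔ hker hgap ψ hψ hlow
end

section
/- Let |Φ⟩ be the maximally entangled state on S qubits between registers A and B (all Schmidt coefficients equal to 2^{−S/2}), |ψ'⟩ an arbitrary pure state on A'B'R, and |θ⟩ a pure state on AA'BB'R with Schmidt rank at most r across the cut AA' versus BB'R. Then |⟨Φ|_{AB} ⊗ ⟨ψ'|_{A'B'R} · |θ⟩|² ≤ r · 2^{−S}. -/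
/-!
Orthonormalising the factors on `AA'` rewrites `θ` as `∑_{j<d} b_j ⊗ w_j` with `d ≤ r` and
`‖θ‖² = ∑ ‖w_j‖²`. Then `⟨χ|θ⟩ = ∑_j ⟨(⟨b_j| ⊗ 1) χ | w_j⟩`, and Cauchy–Schwarz bounds its square
by `r · sup_{‖f‖ = 1} ‖(⟨f| ⊗ 1) χ‖² · ‖θ‖²`. For `χ = Φ ⊗ ψ'` the partial contraction with a unit
vector `f` on `AA'` has norm at most `2^{-S/2}`: since `Φ` is `2^{-S/2}` times the identity on
`A ≅ B`, only the slices `f(y, ·)` meet `ψ'`, each contributing at most `‖f(y, ·)‖²` by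
Cauchy–Schwarz.
-/

namespace SchmidtRank

variable {ι κ : Type*}

noncomputable def tensorVec :
    EuclideanSpace ℂ ι →ₗ[ℂ] EuclideanSpace ℂ κ →ₗ[ℂ] EuclideanSpace ℂ (ι × κ) :=
  LinearMap.mk₂ ℂ (fun x y => WithLp.toLp 2 fun p => x p.1 * y p.2)
    (fun _ _ _ => by ext; simp [add_mul]) (fun _ _ _ => by ext; simp [mul_assoc])
    (fun _ _ _ => by ext; simp [mul_add]) (fun _ _ _ => by ext; simp [mul_left_comm])

@[simp] lemma tensorVec_apply (x : EuclideanSpace ℂ ι) (y : EuclideanSpace ℂ κ) (p : ι × κ) :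
    tensorVec x y p = x p.1 * y p.2 := rfl

variable [Fintype ι]

lemma norm_toLp_sq_eq_re_star_dotProduct (x : ι → ℂ) :
    ‖WithLp.toLp 2 x‖ ^ 2 = (star x ⬝ᵥ x).re := by
  rw [@norm_sq_eq_re_inner ℂ, EuclideanSpace.inner_toLp_toLp, dotProduct_comm,
    RCLike.re_eq_complex_re]

/-- The partial contraction `(⟨f| ⊗ 1) χ`. -/
noncomputable def partialInner (f : EuclideanSpace ℂ ι) (χ : EuclideanSpace ℂ (ι × κ)) :
    EuclideanSpace ℂ κ :=
  WithLp.toLp 2 fun q => inner ℂ f (WithLp.toLp 2 fun x => χ (x, q))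

lemma exists_orthonormal_tensorVec_decomp {r : ℕ} (u : Fin r → EuclideanSpace ℂ ι)
    (v : Fin r → EuclideanSpace ℂ κ) :
    ∃ (d : ℕ) (b : Fin d → EuclideanSpace ℂ ι) (w : Fin d → EuclideanSpace ℂ κ),
      d ≤ r ∧ Orthonormal ℂ b ∧ ∑ i, tensorVec (u i) (v i) = ∑ j, tensorVec (b j) (w j) := by
  set U := Submodule.span ℂ (Set.range u)
  let e := stdOrthonormalBasis ℂ U
  refine ⟨_, fun j => e j, fun j => ∑ i, inner ℂ (e j : EuclideanSpace ℂ ι) (u i) • v i,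
    (finrank_range_le_card (R := ℂ) u).trans_eq (Fintype.card_fin r),
    e.orthonormal.comp_linearIsometry U.subtypeₗᵢ, ?_⟩
  have hu : ∀ i, u i = ∑ j, inner ℂ (e j : EuclideanSpace ℂ ι) (u i) • (e j : EuclideanSpace ℂ ι) :=
    fun i => by
      have := congrArg Subtype.val (e.sum_repr' ⟨u i, Submodule.subset_span ⟨i, rfl⟩⟩)
      simpa using this.symm
  conv_lhs => rw [Finset.sum_congr rfl fun i _ => by rw [hu i]]
  simp only [map_sum, map_smul, LinearMap.sum_apply, LinearMap.smul_apply]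
  rw [Finset.sum_comm]

variable [Fintype κ]

lemma inner_tensorVec_right (χ : EuclideanSpace ℂ (ι × κ)) (x : EuclideanSpace ℂ ι)
    (y : EuclideanSpace ℂ κ) : inner ℂ χ (tensorVec x y) = inner ℂ (partialInner x χ) y := by
  simp [partialInner, PiLp.inner_apply, Fintype.sum_prod_type, Finset.mul_sum]
  rw [Finset.sum_comm]
  refine Finset.sum_congr rfl fun k _ => Finset.sum_congr rfl fun i _ => by ring

lemma inner_tensorVec_tensorVec (x x' : EuclideanSpace ℂ ι) (y y' : EuclideanSpace ℂ κ) :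
    inner ℂ (tensorVec x y) (tensorVec x' y') = inner ℂ x x' * inner ℂ y y' := by
  simp [PiLp.inner_apply, Fintype.sum_prod_type, Finset.sum_mul_sum]
  refine Finset.sum_congr rfl fun k _ => Finset.sum_congr rfl fun i _ => by ring

lemma norm_partialInner_le (f : EuclideanSpace ℂ ι) (χ : EuclideanSpace ℂ (ι × κ)) :
    ‖partialInner f χ‖ ≤ ‖f‖ * ‖χ‖ := by
  rw [← sq_le_sq₀ (norm_nonneg _) (by positivity), mul_pow,
    EuclideanSpace.norm_sq_eq (partialInner f χ), EuclideanSpace.norm_sq_eq χ,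
    Fintype.sum_prod_type, Finset.sum_comm, Finset.mul_sum]
  refine Finset.sum_le_sum fun q _ => ?_
  calc ‖inner ℂ f (WithLp.toLp 2 fun x => χ (x, q))‖ ^ 2
      ≤ (‖f‖ * ‖(WithLp.toLp 2 fun x => χ (x, q) : EuclideanSpace ℂ ι)‖) ^ 2 := by
        gcongr; exact norm_inner_le_norm _ _
    _ = ‖f‖ ^ 2 * ∑ x, ‖χ (x, q)‖ ^ 2 := by
        rw [mul_pow, EuclideanSpace.norm_sq_eq (WithLp.toLp 2 fun x => χ (x, q))]

lemma norm_sq_sum_tensorVec {d : ℕ} {b : Fin d → EuclideanSpace ℂ ι} (hb : Orthonormal ℂ b)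
    (w : Fin d → EuclideanSpace ℂ κ) : ‖∑ j, tensorVec (b j) (w j)‖ ^ 2 = ∑ j, ‖w j‖ ^ 2 := by
  have h : inner ℂ (∑ j, tensorVec (b j) (w j)) (∑ j, tensorVec (b j) (w j))
      = ∑ j, inner ℂ (w j) (w j) := by
    simp only [sum_inner, inner_sum, inner_tensorVec_tensorVec, orthonormal_iff_ite.mp hb,
      ite_mul, one_mul, zero_mul, Finset.sum_ite_eq', Finset.mem_univ, if_true]
  simp_rw [inner_self_eq_norm_sq_to_K] at h
  exact_mod_cast h

theorem norm_inner_sq_le_of_partialInner_le {r : ℕ} {χ : EuclideanSpace ℂ (ι × κ)} {C : ℝ}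
    (hχ : ∀ f, ‖partialInner f χ‖ ≤ C * ‖f‖) (u : Fin r → EuclideanSpace ℂ ι)
    (v : Fin r → EuclideanSpace ℂ κ) :
    ‖inner ℂ χ (∑ i, tensorVec (u i) (v i))‖ ^ 2
      ≤ r * C ^ 2 * ‖∑ i, tensorVec (u i) (v i)‖ ^ 2 := by
  obtain ⟨d, b, w, hdr, hb, hθ⟩ := exists_orthonormal_tensorVec_decomp u v
  have hχb : ∀ j, ‖partialInner (b j) χ‖ ^ 2 ≤ C ^ 2 := fun j => by
    simpa [hb.1 j] using pow_le_pow_left₀ (norm_nonneg _) (hχ (b j)) 2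
  rw [hθ, norm_sq_sum_tensorVec hb, inner_sum]
  simp_rw [inner_tensorVec_right]
  calc ‖∑ j, inner ℂ (partialInner (b j) χ) (w j)‖ ^ 2
      ≤ (∑ j, ‖partialInner (b j) χ‖ * ‖w j‖) ^ 2 := by
        gcongr
        exact (norm_sum_le _ _).trans (Finset.sum_le_sum fun j _ => norm_inner_le_norm _ _)
    _ ≤ (∑ j, ‖partialInner (b j) χ‖ ^ 2) * ∑ j, ‖w j‖ ^ 2 :=
        Finset.sum_mul_sq_le_sq_mul_sq _ _ _
    _ ≤ (d * C ^ 2) * ∑ j, ‖w j‖ ^ 2 := by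
        gcongr
        simpa using Finset.sum_le_sum fun j (_ : j ∈ Finset.univ) => hχb j
    _ ≤ r * C ^ 2 * ∑ j, ‖w j‖ ^ 2 := by gcongr

variable {X α β : Type*} [DecidableEq X]

/-- `(c ∑_x |x⟩|x⟩) ⊗ ψ`, with the registers regrouped as `(X × α) × (X × β)`. -/
noncomputable def diagTensor (c : ℂ) (ψ : EuclideanSpace ℂ (α × β)) :
    EuclideanSpace ℂ ((X × α) × (X × β)) :=
  WithLp.toLp 2 fun p => (if p.1.1 = p.2.1 then c else 0) * ψ (p.1.2, p.2.2)

variable [Fintype X] [Fintype α]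

lemma partialInner_diagTensor_apply (c : ℂ) (ψ : EuclideanSpace ℂ (α × β))
    (f : EuclideanSpace ℂ (X × α)) (y : X) (q : β) :
    partialInner f (diagTensor c ψ) (y, q)
      = c * partialInner (WithLp.toLp 2 fun a => f (y, a)) ψ q := by
  simp [partialInner, diagTensor, PiLp.inner_apply, Fintype.sum_prod_type, Finset.mul_sum,
    mul_assoc]

variable [Fintype β]

lemma norm_partialInner_diagTensor_le (c : ℂ) (ψ : EuclideanSpace ℂ (α × β))
    (f : EuclideanSpace ℂ (X × α)) :
    ‖partialInner f (diagTensor c ψ)‖ ≤ ‖c‖ * ‖ψ‖ * ‖f‖ := by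
  rw [← sq_le_sq₀ (norm_nonneg _) (by positivity)]
  calc ‖partialInner f (diagTensor c ψ)‖ ^ 2
      = ‖c‖ ^ 2 * ∑ y, ‖partialInner (WithLp.toLp 2 fun a => f (y, a)) ψ‖ ^ 2 := by
        simp_rw [EuclideanSpace.norm_sq_eq, Fintype.sum_prod_type, partialInner_diagTensor_apply,
          norm_mul, mul_pow, Finset.mul_sum]
    _ ≤ ‖c‖ ^ 2 * ∑ y, (‖(WithLp.toLp 2 fun a => f (y, a) : EuclideanSpace ℂ α)‖ * ‖ψ‖) ^ 2 := by
        gcongr; exact norm_partialInner_le _ _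
    _ = (‖c‖ * ‖ψ‖ * ‖f‖) ^ 2 := by
        simp_rw [mul_pow, ← Finset.sum_mul, EuclideanSpace.norm_sq_eq f, Fintype.sum_prod_type,
          EuclideanSpace.norm_sq_eq]
        ring

end SchmidtRank

open SchmidtRank

/-- Let `|Φ⟩` be the maximally entangled state on `S` qubits between registers `A` and `B`
(all Schmidt coefficients equal to `2^{-S/2}`), `|ψ'⟩` a unit vector on `A'B'R`, and `|θ⟩`
a unit vector on `AA'BB'R` of Schmidt rank at most `r` across the cut `AA'` vs `BB'R`
(i.e. `θ` is a sum of `r` product vectors across that cut).  Then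
`|⟨Φ|_{AB} ⊗ ⟨ψ'|_{A'B'R} · |θ⟩|² ≤ r · 2^{-S}`. -/
theorem stmt3 {S r a' b' rr : ℕ}
    (Φ : Fin (2 ^ S) × Fin (2 ^ S) → ℂ)
    (hΦ : Φ = fun p => if p.1 = p.2 then ((Real.sqrt (2 ^ S))⁻¹ : ℂ) else 0)
    (ψ' : Fin a' × Fin b' × Fin rr → ℂ) (hψ' : star ψ' ⬝ᵥ ψ' = 1)
    (θ : (Fin (2 ^ S) × Fin a') × (Fin (2 ^ S) × Fin b' × Fin rr) → ℂ)
    (hθ : star θ ⬝ᵥ θ = 1)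
    (u : Fin r → Fin (2 ^ S) × Fin a' → ℂ)
    (v : Fin r → Fin (2 ^ S) × Fin b' × Fin rr → ℂ)
    (hrank : θ = fun p => ∑ i, u i p.1 * v i p.2) :
    ‖∑ p, (starRingEnd ℂ) (Φ (p.1.1, p.2.1) * ψ' (p.1.2, p.2.2)) * θ p‖ ^ 2
      ≤ (r : ℝ) / 2 ^ S := by
  set c : ℂ := (Real.sqrt (2 ^ S))⁻¹
  have hθ_decomp : WithLp.toLp 2 θ
      = ∑ i, tensorVec (WithLp.toLp 2 (u i)) (WithLp.toLp 2 (v i)) := by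
    ext p; simp [hrank]
  have hoverlap : ∑ p, (starRingEnd ℂ) (Φ (p.1.1, p.2.1) * ψ' (p.1.2, p.2.2)) * θ p
      = inner ℂ (diagTensor c (WithLp.toLp 2 ψ')) (WithLp.toLp 2 θ) := by
    simp [hΦ, diagTensor, PiLp.inner_apply, mul_comm]
  have hc : ‖c‖ ^ 2 = (2 ^ S)⁻¹ := by
    simp [c, Real.sq_sqrt]
  rw [hoverlap]
  calc _ ≤ r * (‖c‖ * ‖WithLp.toLp 2 ψ'‖) ^ 2 * ‖WithLp.toLp 2 θ‖ ^ 2 := by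
        rw [hθ_decomp]
        exact norm_inner_sq_le_of_partialInner_le (norm_partialInner_diagTensor_le c _) _ _
    _ = r / 2 ^ S := by
        rw [mul_pow, hc, norm_toLp_sq_eq_re_star_dotProduct, hψ',
          norm_toLp_sq_eq_re_star_dotProduct, hθ, Complex.one_re]
        ring
end

section
/- If |ψ⟩ is a pure state on AA'BB'R whose squared overlap with |Φ⟩_{AB} ⊗ |ψ'⟩_{A'B'R} is at least 1 − δ, where |Φ⟩ is the S-qubit maximally entangled state, then the Schmidt rank of |ψ⟩ across the cut AA' versus BB'R is at least (1 − δ)·2^S. -/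
/-!
View `ψ` and `Φ ⊗ ψ'` as families of vectors on `AA'` indexed by `q ∈ BB'R`, their columns
`x q` and `y q`, so that the overlap is `∑ q, ⟪y q, x q⟫`. Every `x q` lies in the span `U` of
the `r` left factors. Expanding `x q` in an orthonormal basis `(b k)` of `U` and applying
Cauchy–Schwarz gives `|overlap|² ≤ ‖ψ‖² · ∑ k, ∑ q, |⟪y q, b k⟫|²`. Contracting `Φ ⊗ ψ'` with a
unit vector on `AA'` leaves `2^{-S/2}` times a contraction with `ψ'`, so by Cauchy–Schwarz
again each inner sum is at most `2^{-S}`, and `1 - δ ≤ r · 2^{-S}`.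
-/

open Finset Matrix Module ComplexConjugate
open scoped InnerProductSpace

theorem norm_sum_mul_sq_le {ι R : Type*} [SeminormedRing R] (s : Finset ι) (f g : ι → R) :
    ‖∑ i ∈ s, f i * g i‖ ^ 2 ≤ (∑ i ∈ s, ‖f i‖ ^ 2) * ∑ i ∈ s, ‖g i‖ ^ 2 :=
  calc ‖∑ i ∈ s, f i * g i‖ ^ 2 ≤ (∑ i ∈ s, ‖f i‖ * ‖g i‖) ^ 2 :=
        pow_le_pow_left₀ (norm_nonneg _)
          ((norm_sum_le _ _).trans (sum_le_sum fun _ _ => norm_mul_le _ _)) 2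
    _ ≤ _ := sum_mul_sq_le_sq_mul_sq _ _ _

theorem norm_sq_sum_inner_le_finrank_mul {𝕜 E κ : Type*} [RCLike 𝕜] [NormedAddCommGroup E]
    [InnerProductSpace 𝕜 E] [Fintype κ] (U : Submodule 𝕜 E) [FiniteDimensional 𝕜 U]
    (x y : κ → E) (hx : ∀ q, x q ∈ U) {c : ℝ}
    (hy : ∀ e ∈ U, ∑ q, ‖⟪y q, e⟫_𝕜‖ ^ 2 ≤ c * ‖e‖ ^ 2) :
    ‖∑ q, ⟪y q, x q⟫_𝕜‖ ^ 2 ≤ finrank 𝕜 U * c * ∑ q, ‖x q‖ ^ 2 := by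
  let b := stdOrthonormalBasis 𝕜 U
  have hexpand (q : κ) :
      ⟪y q, x q⟫_𝕜 = ∑ k, ⟪y q, (b k : E)⟫_𝕜 * ⟪(b k : E), x q⟫_𝕜 := by
    have hsum := congrArg Subtype.val (b.sum_repr' ⟨x q, hx q⟩)
    simp only [Submodule.coe_sum, Submodule.coe_smul, Submodule.coe_inner] at hsum
    conv_lhs => rw [← hsum]
    simp only [inner_sum, inner_smul_right, mul_comm]
  have hparseval (q : κ) : ∑ k, ‖⟪(b k : E), x q⟫_𝕜‖ ^ 2 = ‖x q‖ ^ 2 := by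
    simpa only [Submodule.coe_inner, Submodule.coe_norm] using
      b.sum_sq_norm_inner_right ⟨x q, hx q⟩
  calc ‖∑ q, ⟪y q, x q⟫_𝕜‖ ^ 2
      = ‖∑ qk : κ × Fin (finrank 𝕜 U),
          ⟪y qk.1, (b qk.2 : E)⟫_𝕜 * ⟪(b qk.2 : E), x qk.1⟫_𝕜‖ ^ 2 := by
        simp only [hexpand, Fintype.sum_prod_type]
    _ ≤ (∑ qk : κ × Fin (finrank 𝕜 U), ‖⟪y qk.1, (b qk.2 : E)⟫_𝕜‖ ^ 2) *
          ∑ qk : κ × Fin (finrank 𝕜 U), ‖⟪(b qk.2 : E), x qk.1⟫_𝕜‖ ^ 2 :=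
        norm_sum_mul_sq_le _ _ _
    _ = (∑ k, ∑ q, ‖⟪y q, (b k : E)⟫_𝕜‖ ^ 2) * ∑ q, ‖x q‖ ^ 2 := by
        simp only [Fintype.sum_prod_type, hparseval]
        rw [Finset.sum_comm]
    _ ≤ (∑ _k : Fin (finrank 𝕜 U), c) * ∑ q, ‖x q‖ ^ 2 := by
        gcongr with k
        simpa only [Submodule.norm_coe, b.orthonormal.1 k, one_pow, mul_one] using hy _ (b k).2
    _ = finrank 𝕜 U * c * ∑ q, ‖x q‖ ^ 2 := by simp

theorem norm_sq_sum_conj_mul_le_of_eq_sum_mul {𝕜 ι κ : Type*} [RCLike 𝕜] [Fintype ι]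
    [Fintype κ] (X ψ : ι × κ → 𝕜) {c : ℝ} (hc : 0 ≤ c)
    (hX : ∀ e : ι → 𝕜, ∑ q, ‖∑ p, conj (X (p, q)) * e p‖ ^ 2 ≤ c * ∑ p, ‖e p‖ ^ 2)
    {r : ℕ} (u : Fin r → ι → 𝕜) (v : Fin r → κ → 𝕜)
    (hψ : ψ = fun p => ∑ i, u i p.1 * v i p.2) :
    ‖∑ p, conj (X p) * ψ p‖ ^ 2 ≤ r * c * ∑ p, ‖ψ p‖ ^ 2 := by
  let x (q : κ) : EuclideanSpace 𝕜 ι := WithLp.toLp 2 fun p => ψ (p, q)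
  let y (q : κ) : EuclideanSpace 𝕜 ι := WithLp.toLp 2 fun p => X (p, q)
  let U := Submodule.span 𝕜 (Set.range fun i => (WithLp.toLp 2 (u i) : EuclideanSpace 𝕜 ι))
  have hx (q : κ) : x q ∈ U := by
    have hcol : x q = ∑ i, v i q • WithLp.toLp 2 (u i) := by
      ext p
      simp [x, hψ, mul_comm]
    rw [hcol]
    exact U.sum_mem fun i _ => U.smul_mem _ (Submodule.subset_span ⟨i, rfl⟩)
  have hy (e : EuclideanSpace 𝕜 ι) (_ : e ∈ U) :
      ∑ q, ‖⟪y q, e⟫_𝕜‖ ^ 2 ≤ c * ‖e‖ ^ 2 := by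
    simpa [y, EuclideanSpace.inner_eq_star_dotProduct, dotProduct, EuclideanSpace.norm_sq_eq,
      mul_comm] using hX e
  have hrank : (finrank 𝕜 U : ℝ) ≤ r := by
    exact_mod_cast (finrank_range_le_card _).trans (Fintype.card_fin r).le
  calc ‖∑ p, conj (X p) * ψ p‖ ^ 2 = ‖∑ q, ⟪y q, x q⟫_𝕜‖ ^ 2 := by
        simp [x, y, EuclideanSpace.inner_eq_star_dotProduct, dotProduct,
          Fintype.sum_prod_type_right, mul_comm]
    _ ≤ finrank 𝕜 U * c * ∑ q, ‖x q‖ ^ 2 := norm_sq_sum_inner_le_finrank_mul U x y hx hy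
    _ ≤ r * c * ∑ p, ‖ψ p‖ ^ 2 := by
        rw [Fintype.sum_prod_type_right]
        simp only [x, EuclideanSpace.norm_sq_eq]
        gcongr

theorem sum_norm_sq_sum_conj_ite_mul_le {𝕜 A A' K : Type*} [RCLike 𝕜] [Fintype A]
    [DecidableEq A] [Fintype A'] [Fintype K] (s : 𝕜) (φ : A' × K → 𝕜) (e : A × A' → 𝕜) :
    ∑ q : A × K, ‖∑ p : A × A', conj ((if p.1 = q.1 then s else 0) * φ (p.2, q.2)) * e p‖ ^ 2
      ≤ ‖s‖ ^ 2 * (∑ j, ‖φ j‖ ^ 2) * ∑ p, ‖e p‖ ^ 2 := by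
  have hcollapse (q : A × K) :
      ∑ p : A × A', conj ((if p.1 = q.1 then s else 0) * φ (p.2, q.2)) * e p
        = conj s * ∑ a', conj (φ (a', q.2)) * e (q.1, a') := by
    rw [Fintype.sum_prod_type, Finset.sum_eq_single q.1 (fun a _ ha => by simp [ha]) (by simp),
      mul_sum]
    simp [mul_assoc]
  calc ∑ q : A × K, ‖∑ p : A × A', conj ((if p.1 = q.1 then s else 0) * φ (p.2, q.2)) * e p‖ ^ 2
      = ∑ q : A × K, ‖s‖ ^ 2 * ‖∑ a', conj (φ (a', q.2)) * e (q.1, a')‖ ^ 2 := by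
        simp only [hcollapse, norm_mul, RCLike.norm_conj, mul_pow]
    _ ≤ ∑ q : A × K, ‖s‖ ^ 2 * ((∑ a', ‖φ (a', q.2)‖ ^ 2) * ∑ a', ‖e (q.1, a')‖ ^ 2) := by
        gcongr with q
        simpa only [RCLike.norm_conj] using
          norm_sum_mul_sq_le univ (fun a' => conj (φ (a', q.2))) fun a' => e (q.1, a')
    _ = ‖s‖ ^ 2 * (∑ j, ‖φ j‖ ^ 2) * ∑ p, ‖e p‖ ^ 2 := by
        rw [Fintype.sum_prod_type_right fun j => ‖φ j‖ ^ 2, Fintype.sum_prod_type,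
          Fintype.sum_prod_type fun p => ‖e p‖ ^ 2, mul_assoc, Finset.sum_mul_sum, Finset.mul_sum,
          Finset.sum_comm]
        simp only [Finset.mul_sum, mul_comm]

theorem sum_norm_sq_eq_one_of_star_dotProduct_self {𝕜 ι : Type*} [RCLike 𝕜] [Fintype ι]
    {x : ι → 𝕜} (hx : star x ⬝ᵥ x = 1) : ∑ i, ‖x i‖ ^ 2 = 1 := by
  have hsum : star x ⬝ᵥ x = ((∑ i, ‖x i‖ ^ 2 : ℝ) : 𝕜) := by
    simp [dotProduct, RCLike.conj_mul]
  exact_mod_cast hsum.symm.trans hx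

/-- If a unit vector `|ψ⟩` on `AA'BB'R` has squared overlap at least `1 − δ` with
`|Φ⟩_{AB} ⊗ |ψ'⟩_{A'B'R}`, where `|Φ⟩` is the `S`-qubit maximally entangled state, then the
Schmidt rank of `|ψ⟩` across the cut `AA'` vs `BB'R` is at least `(1 − δ)·2^S`: any
decomposition of `ψ` into `r` product terms across that cut must have `r ≥ (1 − δ)·2^S`. -/
theorem stmt5 {S a' b' rr : ℕ} (δ : ℝ)
    (Φ : Fin (2 ^ S) × Fin (2 ^ S) → ℂ)
    (hΦ : Φ = fun p => if p.1 = p.2 then ((Real.sqrt (2 ^ S))⁻¹ : ℂ) else 0)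
    (ψ' : Fin a' × Fin b' × Fin rr → ℂ) (hψ' : star ψ' ⬝ᵥ ψ' = 1)
    (ψ : (Fin (2 ^ S) × Fin a') × (Fin (2 ^ S) × Fin b' × Fin rr) → ℂ)
    (hψ : star ψ ⬝ᵥ ψ = 1)
    (hoverlap : 1 - δ ≤
      ‖∑ p, (starRingEnd ℂ) (Φ (p.1.1, p.2.1) * ψ' (p.1.2, p.2.2)) * ψ p‖ ^ 2) :
    ∀ (r : ℕ) (u : Fin r → Fin (2 ^ S) × Fin a' → ℂ)
      (v : Fin r → Fin (2 ^ S) × Fin b' × Fin rr → ℂ),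
      ψ = (fun p => ∑ i, u i p.1 * v i p.2) → (1 - δ) * 2 ^ S ≤ (r : ℝ) := by
  intro r u v hdecomp
  have hψ'_norm := sum_norm_sq_eq_one_of_star_dotProduct_self hψ'
  have hψ_norm := sum_norm_sq_eq_one_of_star_dotProduct_self hψ
  have hscale : ‖((Real.sqrt (2 ^ S))⁻¹ : ℂ)‖ ^ 2 = (2 ^ S)⁻¹ := by
    simp [inv_pow]
  have hX (e : Fin (2 ^ S) × Fin a' → ℂ) :
      ∑ q : Fin (2 ^ S) × Fin b' × Fin rr, ‖∑ p, conj (Φ (p.1, q.1) * ψ' (p.2, q.2)) * e p‖ ^ 2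
        ≤ (2 ^ S)⁻¹ * ∑ p, ‖e p‖ ^ 2 := by
    subst hΦ
    simpa [hscale, hψ'_norm] using
      sum_norm_sq_sum_conj_ite_mul_le ((Real.sqrt (2 ^ S))⁻¹ : ℂ) ψ' e
  have hbound := norm_sq_sum_conj_mul_le_of_eq_sum_mul (c := (2 ^ S)⁻¹)
    (fun p => Φ (p.1.1, p.2.1) * ψ' (p.1.2, p.2.2)) ψ (by positivity) hX u v hdecomp
  rw [hψ_norm, mul_one] at hbound
  calc (1 - δ) * 2 ^ S ≤ r * (2 ^ S)⁻¹ * 2 ^ S := by gcongr; exact hoverlap.trans hbound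
    _ = r := by field_simp
end
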